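/- Let R be an associative unital algebra over a commutative ring K, q, β ∈ K, and x, y ∈ R with yx = q·xy + β·y. Then for all natural numbers m, n: y^m · x^n = (q^m·x + [m]_q·β·1)^n · y^m, where [m]_q = 1 + q + ... + q^{m-1}. -/

import Mathlib

/-- The q-integer `[m]_q = 1 + q + ⋯ + q^(m-1)`. -/
def qint {K : Type*} [CommRing K] (q : K) (n : ℕ) : K := ∑ i ∈ Finset.range n, q ^ i

/-! Commuting `y` past `x` turns every affine expression `a • x + c • 1` into another one,
so `y ^ m` conjugates `x` into `q ^ m • x + ([m]_q β) • 1`, and hence `x ^ n` into its `n`-th power. -/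

section

variable {K : Type*} [CommRing K] {R : Type*} [Ring R] [Algebra K R]

lemma qint_succ (q : K) (m : ℕ) : qint q (m + 1) = qint q m + q ^ m :=
  Finset.sum_range_succ _ _

lemma semiconjBy_smul_add_smul_one {q β : K} {x y : R} (h : y * x = q • (x * y) + β • y)
    (a c : K) : SemiconjBy y (a • x + c • 1) ((q * a) • x + (a * β + c) • 1) := by
  simp only [SemiconjBy, mul_add, add_mul, mul_smul_comm, smul_mul_assoc, h, smul_add,
    smul_smul, add_smul, mul_one, one_mul, mul_comm a q]
  abel

lemma semiconjBy_pow_of_mul_eq {q β : K} {x y : R} (h : y * x = q • (x * y) + β • y) (m : ℕ) :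
    SemiconjBy (y ^ m) x (q ^ m • x + (qint q m * β) • 1) := by
  induction m with
  | zero => simp [qint, SemiconjBy]
  | succ m ih =>
    rw [pow_succ', qint_succ, pow_succ', add_mul, add_comm (qint q m * β)]
    exact (semiconjBy_smul_add_smul_one h _ _).mul_left ih

end

theorem q_mul_formula_beta {K : Type*} [CommRing K] {R : Type*} [Ring R] [Algebra K R]
    (q β : K) (x y : R) (h : y * x = q • (x * y) + β • y) (m n : ℕ) :
    y ^ m * x ^ n = (q ^ m • x + (qint q m * β) • (1 : R)) ^ n * y ^ m :=
  ((semiconjBy_pow_of_mul_eq h m).pow_right n).eq
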